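/- arXiv:1611.07543 — 2 statements merged into one kernel-verified Lean document; each statement's English description precedes it below -/
import Mathlib

section
/- Let G be a topologically finitely generated group (with d(G) = d) and let 1 → K → E → G → 1 be an extension with K a finite minimal normal subgroup of E that is abelian. Then E can be topologically generated by d + 1 elements. -/
/-!
Lift the `d` generators of `E ⧸ K` to `E` and add one nontrivial element `k ∈ K`; let `M` be the
subgroup they generate, so that `M ⊔ K = E`. Since `K` is abelian, `M ⊓ K` is normalized by both
`M` and `K`, hence normal in `E`. It contains `k`, so minimality of `K` forces `M ⊓ K = K`,
i.e. `K ≤ M` and `M = E`.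
-/

namespace Subgroup

variable {E : Type*} [Group E]

theorem closure_sup_eq_top_of_closure_image_eq_top (K : Subgroup E) [K.Normal] {S : Set E}
    (hS : closure ((↑) '' S : Set (E ⧸ K)) = ⊤) : closure S ⊔ K = ⊤ := by
  rw [← QuotientGroup.ker_mk' K, ← comap_map_eq, MonoidHom.map_closure, QuotientGroup.coe_mk', hS,
    comap_top]

theorem inf_normal_of_sup_eq_top {M K : Subgroup E} [K.Normal] [IsMulCommutative K]
    (hsup : M ⊔ K = ⊤) : (M ⊓ K).Normal := by
  rw [← normalizer_eq_top_iff, eq_top_iff, ← hsup]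
  refine sup_le ((le_inf M.le_normalizer le_normalizer_of_normal).trans
    inf_normalizer_le_normalizer_inf) ?_
  calc K ≤ centralizer K := le_centralizer K
    _ ≤ centralizer (M ⊓ K : Subgroup E) := centralizer_le inf_le_right
    _ ≤ normalizer (M ⊓ K : Subgroup E) := centralizer_le_normalizer _

theorem eq_top_of_sup_eq_top_of_inf_ne_bot {M K : Subgroup E} [K.Normal] [IsMulCommutative K]
    (hmin : ∀ N : Subgroup E, N.Normal → N ≤ K → N = ⊥ ∨ N = K)
    (hsup : M ⊔ K = ⊤) (hinf : M ⊓ K ≠ ⊥) : M = ⊤ := by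
  rcases hmin _ (inf_normal_of_sup_eq_top hsup) inf_le_right with h | h
  · exact absurd h hinf
  · rwa [sup_eq_left.mpr (inf_eq_right.mp h)] at hsup

end Subgroup

open Subgroup in
theorem stmt_5_general (E : Type*) [Group E] (d : ℕ) (K : Subgroup E) [nK : K.Normal]
    (hbot : K ≠ ⊥)
    (habel : ∀ a b : E, a ∈ K → b ∈ K → a * b = b * a)
    (hmin : ∀ N : Subgroup E, N.Normal → N ≤ K → N = ⊥ ∨ N = K)
    (hG : ∃ T : Finset (E ⧸ K), T.card ≤ d ∧ Subgroup.closure (T : Set (E ⧸ K)) = ⊤) :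
    ∃ T : Finset E, T.card ≤ d + 1 ∧ Subgroup.closure (T : Set E) = ⊤ := by
  classical
  have : IsMulCommutative K := le_centralizer_iff_isMulCommutative.mp fun a ha =>
    mem_centralizer_iff.mpr fun b hb => habel b a hb ha
  obtain ⟨T, hTcard, hTtop⟩ := hG
  obtain ⟨k, hkK, hk1⟩ := K.nontrivial_iff_exists_ne_one.mp (K.nontrivial_iff_ne_bot.mpr hbot)
  set S : Finset E := insert k (T.image Quotient.out)
  refine ⟨S, (Finset.card_insert_le _ _).trans
    (Nat.succ_le_succ (Finset.card_image_le.trans hTcard)), ?_⟩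
  have hsup : closure (S : Set E) ⊔ K = ⊤ := by
    refine closure_sup_eq_top_of_closure_image_eq_top K (top_le_iff.mp (hTtop ▸ closure_mono ?_))
    exact fun q hq => ⟨q.out, Finset.mem_insert_of_mem (Finset.mem_image_of_mem _ hq), q.out_eq'⟩
  refine eq_top_of_sup_eq_top_of_inf_ne_bot hmin hsup ((_ ⊓ K).nontrivial_iff_ne_bot.mp ?_)
  exact (_ ⊓ K).nontrivial_iff_exists_ne_one.mpr ⟨k, ⟨subset_closure (by simp [S]), hkK⟩, hk1⟩

/-- If `K` is a finite abelian minimal normal subgroup of `E` and the quotient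
`G = E/K` is generated by `d` elements, then `E` is generated by `d + 1` elements. -/
theorem stmt_5 (E : Type*) [Group E] (d : ℕ) (K : Subgroup E) [nK : K.Normal] [Finite K]
    (hbot : K ≠ ⊥)
    (habel : ∀ a b : E, a ∈ K → b ∈ K → a * b = b * a)
    (hmin : ∀ N : Subgroup E, N.Normal → N ≤ K → N = ⊥ ∨ N = K)
    (hG : ∃ T : Finset (E ⧸ K), T.card ≤ d ∧ Subgroup.closure (T : Set (E ⧸ K)) = ⊤) :
    ∃ T : Finset E, T.card ≤ d + 1 ∧ Subgroup.closure (T : Set E) = ⊤ :=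
  stmt_5_general E d K (nK := nK) hbot habel hmin hG
end

section
/- Let F be a free group on d ≥ 2 generators and p a prime. The number of equivalence classes of irreducible n-dimensional representations of F over F_p satisfies r_n(F, F_p) ≥ c_p^d · p^{n²(d−1)}, where c_p = 1 − 1/p − 1/p². -/
/-- A representation `ρ : F →* GL_n(F_p)` is irreducible if the only invariant
submodules of `F_p^n` are `0` and everything. -/
def MatrixIrreducible {Γ : Type*} [Group Γ] {n p : ℕ}
    (ρ : Γ →* GL (Fin n) (ZMod p)) : Prop :=
  ∀ W : Submodule (ZMod p) (Fin n → ZMod p),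
    (∀ g : Γ, ∀ x ∈ W, Matrix.mulVec ((ρ g : Matrix (Fin n) (Fin n) (ZMod p))) x ∈ W) →
      W = ⊥ ∨ W = ⊤

/-!
Homomorphisms `F → G = GL_n(F_p)` are `d`-tuples in `G`, and a reducible tuple lies in `Stab(W)^d`
for a proper nonzero subspace `W`. `G` permutes the `N_k ≥ p^{k(n-k)}` subspaces of dimension `k`
transitively (graphs of linear maps `F_p^k → F_p^{n-k}` already give that many), so
`|Stab(W)| = |G| / N_k`, and for `d ≥ 2` at most `N_k (|G| / N_k)^d ≤ |G|^d p^{-k(n-k)}` tuples fix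
some `k`-dimensional subspace. As `k(n-k) ≥ n-1` and `(n-1) p^{-(n-1)} ≤ 1/p`, at most `|G|^d / p`
tuples are reducible. Conjugacy classes have at most `|G|` elements, so there are at least
`(1 - 1/p) |G|^{d-1}` classes of irreducible tuples, and
`|G| = p^{n²} ∏_{j=1}^{n} (1 - p^{-j}) ≥ (1 - 1/p - 1/p²) p^{n²}`.
-/

open Module MulAction Finset
open scoped Pointwise

theorem Nat.card_subtype_le_sum_of_cover {ι α : Type*} [Finite α] {Q : α → Prop} (s : Finset ι)
    (P : ι → α → Prop) (hcover : ∀ a, Q a → ∃ i ∈ s, P i a) :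
    Nat.card {a // Q a} ≤ ∑ i ∈ s, Nat.card {a // P i a} := by
  classical
  have := Fintype.ofFinite α
  simp only [Nat.card_eq_fintype_card, Fintype.card_subtype]
  refine (card_le_card fun a ha => ?_).trans card_biUnion_le
  obtain ⟨i, hi, h⟩ := hcover a (mem_filter.1 ha).2
  exact mem_biUnion.2 ⟨i, hi, mem_filter.2 ⟨mem_univ _, h⟩⟩

section GroupAction

variable {G X : Type*} [Group G] [MulAction G X]

theorem card_stabilizer_eq_of_mem_orbit [Finite G] {x y : X} (h : y ∈ orbit G x) :
    Nat.card (stabilizer G y) = Nat.card (stabilizer G x) := by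
  have hindex : (stabilizer G y).index = (stabilizer G x).index := by
    rw [index_stabilizer, index_stabilizer, orbit_eq_iff.mpr h]
  refine Nat.eq_of_mul_eq_mul_left (Nat.pos_of_ne_zero (stabilizer G x).index_ne_zero_of_finite) ?_
  rw [(stabilizer G x).index_mul_card, ← hindex, (stabilizer G y).index_mul_card]

theorem card_tuples_mem_stabilizer (y : X) (d : ℕ) :
    Nat.card {f : Fin d → G // ∀ i, f i ∈ stabilizer G y} = Nat.card (stabilizer G y) ^ d := by
  rw [Nat.card_congr Equiv.subtypePiEquivPi, Nat.card_fun, Nat.card_fin]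

theorem card_tuples_fixing_mem_orbit_mul_ncard_le [Finite G] (x : X) {d : ℕ} (hd : 2 ≤ d) :
    Nat.card {f : Fin d → G // ∃ y ∈ orbit G x, ∀ i, f i ∈ stabilizer G y} * (orbit G x).ncard
      ≤ Nat.card G ^ d := by
  have hfin : (orbit G x).Finite := Set.finite_range _
  have hG : (orbit G x).ncard * Nat.card (stabilizer G x) = Nat.card G := by
    rw [← index_stabilizer, Subgroup.index_mul_card]
  have ho : 1 ≤ (orbit G x).ncard := (Set.ncard_pos hfin).2 (nonempty_orbit x)
  set s := Nat.card (stabilizer G x)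
  set o := (orbit G x).ncard
  have hcard : Nat.card {f : Fin d → G // ∃ y ∈ orbit G x, ∀ i, f i ∈ stabilizer G y}
      ≤ o * s ^ d := by
    calc _ ≤ ∑ y ∈ hfin.toFinset, Nat.card {f : Fin d → G // ∀ i, f i ∈ stabilizer G y} :=
          Nat.card_subtype_le_sum_of_cover _ _ fun f ⟨y, hy, hf⟩ => ⟨y, hfin.mem_toFinset.2 hy, hf⟩
      _ = ∑ y ∈ hfin.toFinset, s ^ d := sum_congr rfl fun y hy => by
          rw [card_tuples_mem_stabilizer, card_stabilizer_eq_of_mem_orbit (hfin.mem_toFinset.1 hy)]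
      _ = o * s ^ d := by rw [sum_const, smul_eq_mul, ← Set.ncard_eq_toFinset_card _ hfin]
  calc _ ≤ o * s ^ d * o := Nat.mul_le_mul_right _ hcard
    _ = o ^ 2 * s ^ d := by ring
    _ ≤ o ^ d * s ^ d := Nat.mul_le_mul_right _ (Nat.pow_le_pow_right ho hd)
    _ = Nat.card G ^ d := by rw [← mul_pow, hG]

theorem exists_orbit_transversal_card_le [Finite G] (S : Finset X) :
    ∃ R ⊆ S, (∀ a ∈ R, ∀ b ∈ R, b ∈ orbit G a → a = b) ∧ #S ≤ #R * Nat.card G := by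
  classical
  induction S using Finset.strongInduction with
  | H S ih =>
  rcases S.eq_empty_or_nonempty with rfl | ⟨a, ha⟩
  · exact ⟨∅, subset_refl _, by simp, by simp⟩
  obtain ⟨R, hRS, hR, hcard⟩ :=
    ih (S.filter (· ∉ orbit G a)) (filter_ssubset.2 ⟨a, ha, not_not.2 (mem_orbit_self a)⟩)
  have hout : ∀ b ∈ R, b ∉ orbit G a := fun b hb => (mem_filter.1 (hRS hb)).2
  have haR : a ∉ R := fun h => hout a h (mem_orbit_self a)
  have horbit : #(S.filter (· ∈ orbit G a)) ≤ Nat.card G := by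
    rw [← Set.ncard_coe_finset]
    calc _ ≤ (orbit G a).ncard :=
          Set.ncard_le_ncard (fun b hb => (mem_filter.1 hb).2) (Set.finite_range _)
      _ ≤ Nat.card G := (Nat.card_coe_set_eq _).symm.trans_le (Finite.card_range_le _)
  refine ⟨insert a R, insert_subset ha (hRS.trans (filter_subset _ _)), ?_, ?_⟩
  · simp only [mem_insert]
    rintro x (rfl | hx) y (rfl | hy) hxy
    · rfl
    · exact absurd hxy (hout y hy)
    · exact absurd (mem_orbit_symm.1 hxy) (hout x hx)
    · exact hR x hx y hy hxy
  · rw [card_insert_of_notMem haR, add_mul, one_mul,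
      ← card_filter_add_card_filter_not (p := (· ∈ orbit G a))]
    omega

end GroupAction

section Graph

variable {R M N : Type*} [Semiring R] [AddCommMonoid M] [Module R M] [AddCommMonoid N] [Module R N]

theorem LinearMap.graph_injective :
    Function.Injective (graph : (M →ₗ[R] N) → Submodule R (M × N)) :=
  fun T T' h => ext fun m => (h ▸ (T.mem_graph_iff (m, T m)).2 rfl : (m, T m) ∈ T'.graph)

theorem LinearMap.finrank_graph (T : M →ₗ[R] N) : finrank R T.graph = finrank R M := by
  rw [graph_eq_range_prod]
  exact finrank_range_of_inj fun a b h => congrArg Prod.fst h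

end Graph

section Subspaces

variable {K V : Type*} [Field K] [AddCommGroup V] [Module K V]

theorem LinearEquiv.finrank_smul_submodule (e : V ≃ₗ[K] V) (W : Submodule K V) :
    finrank K (e • W : Submodule K V) = finrank K W :=
  e.finrank_map_eq W

variable [FiniteDimensional K V]

theorem Submodule.exists_linearEquiv_map_eq_of_finrank_eq {W W' : Submodule K V}
    (h : finrank K W = finrank K W') : ∃ e : V ≃ₗ[K] V, W.map (e : V →ₗ[K] V) = W' := by
  obtain ⟨U, hU⟩ := W.exists_isCompl
  obtain ⟨U', hU'⟩ := W'.exists_isCompl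
  have hUU' : finrank K U = finrank K U' := by
    have := finrank_add_eq_of_isCompl hU
    have := finrank_add_eq_of_isCompl hU'
    omega
  let eW := LinearEquiv.ofFinrankEq W W' h
  let e := (prodEquivOfIsCompl W U hU).symm ≪≫ₗ
    eW.prodCongr (LinearEquiv.ofFinrankEq U U' hUU') ≪≫ₗ prodEquivOfIsCompl W' U' hU'
  have hmaps : ∀ w : W, e w = eW w := fun w => by simp [e]
  refine ⟨e, eq_of_le_of_finrank_eq ?_ (by rw [LinearEquiv.finrank_map_eq, h])⟩
  rintro _ ⟨w, hw, rfl⟩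
  simp [hmaps ⟨w, hw⟩]

theorem orbit_linearEquiv_submodule (W : Submodule K V) :
    orbit (V ≃ₗ[K] V) W = {W' : Submodule K V | finrank K W' = finrank K W} := by
  ext W'
  constructor
  · rintro ⟨e, rfl⟩
    exact e.finrank_smul_submodule W
  · intro h
    exact Submodule.exists_linearEquiv_map_eq_of_finrank_eq h.symm

theorem card_pow_le_card_finrank_eq [Finite K] {k : ℕ} (hk : k ≤ finrank K V) :
    Nat.card K ^ (k * (finrank K V - k)) ≤ Nat.card {W : Submodule K V // finrank K W = k} := by
  let e : V ≃ₗ[K] (Fin k → K) × (Fin (finrank K V - k) → K) :=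
    LinearEquiv.ofFinrankEq _ _ (by simp; omega)
  let graphIn : ((Fin k → K) →ₗ[K] (Fin (finrank K V - k) → K)) →
      {W : Submodule K V // finrank K W = k} :=
    fun T => ⟨T.graph.map (e.symm : _ →ₗ[K] V), by
      rw [LinearEquiv.finrank_map_eq, LinearMap.finrank_graph]; simp⟩
  have hinj : Function.Injective graphIn := fun T T' h =>
    LinearMap.graph_injective (Submodule.map_injective_of_injective e.symm.injective
      (congrArg Subtype.val h))
  have : Finite V := Module.finite_of_finite K
  calc _ = Nat.card ((Fin k → K) →ₗ[K] (Fin (finrank K V - k) → K)) := by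
        rw [Module.natCard_eq_pow_finrank (K := K) (V := (Fin k → K) →ₗ[K] _),
          Module.finrank_linearMap]; simp
    _ ≤ _ := Nat.card_le_card_of_injective graphIn hinj

end Subspaces

theorem Nat.sub_one_le_mul_sub {k n : ℕ} (hk0 : 0 < k) (hkn : k < n) : n - 1 ≤ k * (n - k) := by
  obtain ⟨a, rfl⟩ : ∃ a, k = a + 1 := ⟨k - 1, by omega⟩
  obtain ⟨b, rfl⟩ : ∃ b, n = a + 1 + b + 1 := ⟨n - (a + 1) - 1, by omega⟩
  rw [show a + 1 + b + 1 - (a + 1) = b + 1 by omega, show a + 1 + b + 1 - 1 = a + b + 1 by omega]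
  nlinarith

section Estimates

variable {x : ℝ}

theorem add_one_mul_pow_le_one (hx0 : 0 ≤ x) (hx : x ≤ 1 / 2) (m : ℕ) : (m + 1) * x ^ m ≤ 1 := by
  have h2 : ((m + 1 : ℕ) : ℝ) ≤ 2 ^ m := by exact_mod_cast Nat.lt_two_pow_self
  push_cast at h2
  calc (m + 1) * x ^ m ≤ 2 ^ m * (1 / 2) ^ m := by gcongr
    _ = 1 := by rw [← mul_pow]; norm_num

theorem sum_Ioo_pow_mul_sub_le (hx0 : 0 ≤ x) (hx : x ≤ 1 / 2) (n : ℕ) :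
    ∑ k ∈ Ioo 0 n, x ^ (k * (n - k)) ≤ x := by
  have hterm : ∀ k ∈ Ioo 0 n, x ^ (k * (n - k)) ≤ x ^ (n - 1) := fun k hk =>
    pow_le_pow_of_le_one hx0 (by linarith) ((mem_Ioo.1 hk).elim Nat.sub_one_le_mul_sub)
  refine (sum_le_card_nsmul _ _ _ hterm).trans ?_
  rw [Nat.card_Ioo, nsmul_eq_mul]
  rcases Nat.lt_or_ge n 2 with hn | hn
  · simp [Nat.sub_eq_zero_of_le (by omega : n ≤ 1), hx0]
  · obtain ⟨m, rfl⟩ := Nat.exists_eq_add_of_le' hn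
    have := add_one_mul_pow_le_one hx0 hx m
    rw [show m + 2 - 1 = m + 1 by omega, pow_succ]
    push_cast
    nlinarith

theorem one_sub_sub_sq_add_pow_le_prod (hx0 : 0 ≤ x) (hx1 : x ≤ 1) (m : ℕ) :
    1 - x - x ^ 2 + x ^ (m + 2) ≤ ∏ j ∈ range (m + 1), (1 - x ^ (j + 1)) := by
  induction m with
  | zero => simp
  | succ m ih =>
    rw [prod_range_succ]
    have hpow : x ^ (2 * m + 4) ≤ x ^ (m + 4) := pow_le_pow_of_le_one hx0 hx1 (by omega)
    have hfac : 0 ≤ 1 - x ^ (m + 2) := sub_nonneg.2 (pow_le_one₀ hx0 hx1)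
    have hexpand : (1 - x - x ^ 2 + x ^ (m + 2)) * (1 - x ^ (m + 2))
        = 1 - x - x ^ 2 + x ^ (m + 1 + 2) + (x ^ (m + 4) - x ^ (2 * m + 4)) := by ring
    calc 1 - x - x ^ 2 + x ^ (m + 1 + 2)
        ≤ (1 - x - x ^ 2 + x ^ (m + 2)) * (1 - x ^ (m + 2)) := by linarith
      _ ≤ _ := mul_le_mul_of_nonneg_right ih hfac

theorem one_sub_sub_sq_le_prod (hx0 : 0 ≤ x) (hx1 : x ≤ 1) (n : ℕ) :
    1 - x - x ^ 2 ≤ ∏ j ∈ range n, (1 - x ^ (j + 1)) := by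
  cases n with
  | zero => simp only [prod_range_zero]; nlinarith
  | succ m => linarith [one_sub_sub_sq_add_pow_le_prod hx0 hx1 m, pow_nonneg hx0 (m + 2)]

end Estimates

theorem card_GL_field_ge {K : Type*} [Field K] [Fintype K] (n : ℕ) :
    (1 - 1 / (Fintype.card K : ℝ) - 1 / (Fintype.card K : ℝ) ^ 2) * (Fintype.card K : ℝ) ^ (n ^ 2)
      ≤ Nat.card (GL (Fin n) K) := by
  have hq := Fintype.card_pos (α := K)
  rw [Matrix.card_GL_field]
  generalize Fintype.card K = q at hq ⊢
  have hx0 : 0 ≤ 1 / (q : ℝ) := by positivity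
  have hx1 : 1 / (q : ℝ) ≤ 1 := div_le_one_of_le₀ (by exact_mod_cast hq) (by positivity)
  have hterm : ∀ j ∈ range n,
      ((q ^ n - q ^ (n - 1 - j) : ℕ) : ℝ) = (q : ℝ) ^ n * (1 - (1 / (q : ℝ)) ^ (j + 1)) := by
    intro j hj
    have hsplit : (q : ℝ) ^ n = q ^ (n - 1 - j) * q ^ (j + 1) := by
      rw [← pow_add]; congr 1; have := mem_range.1 hj; omega
    rw [Nat.cast_sub (Nat.pow_le_pow_right hq (by omega)), Nat.cast_pow, Nat.cast_pow, hsplit,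
      one_div_pow]
    field_simp
  rw [Nat.cast_prod, Fin.prod_univ_eq_prod_range (fun i => ((q ^ n - q ^ i : ℕ) : ℝ)),
    ← prod_range_reflect, prod_congr rfl hterm, prod_mul_distrib, prod_const, card_range, ← pow_mul,
    ← sq, ← one_div_pow, mul_comm]
  exact mul_le_mul_of_nonneg_left (one_sub_sub_sq_le_prod hx0 hx1 n) (by positivity)

section Reducible

variable {K V : Type*} [Field K] [Finite K] [AddCommGroup V] [Module K V] [FiniteDimensional K V]

theorem card_tuples_fixing_finrank_eq_le {d k : ℕ} (hd : 2 ≤ d) (hk : k ≤ finrank K V) :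
    (Nat.card {f : Fin d → (V ≃ₗ[K] V) //
        ∃ W : Submodule K V, finrank K W = k ∧ ∀ i, f i • W = W} : ℝ)
      ≤ Nat.card (V ≃ₗ[K] V) ^ d * (1 / Nat.card K : ℝ) ^ (k * (finrank K V - k)) := by
  have : Finite V := Module.finite_of_finite K
  have : Finite (V ≃ₗ[K] V) := Finite.of_injective _ DFunLike.coe_injective
  have hcount := card_pow_le_card_finrank_eq (K := K) (V := V) hk
  have hq : 0 < Nat.card K ^ (k * (finrank K V - k)) := pow_pos Nat.card_pos _
  obtain ⟨⟨W, hW⟩⟩ : Nonempty {W : Submodule K V // finrank K W = k} :=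
    (Nat.card_pos_iff.1 (hq.trans_le hcount)).1
  have key := card_tuples_fixing_mem_orbit_mul_ncard_le (G := V ≃ₗ[K] V) W hd
  simp_rw [orbit_linearEquiv_submodule W, hW, mem_stabilizer_iff, Set.mem_ofPred_eq,
    ← Nat.card_coe_set_eq, Set.coe_ofPred] at key
  rw [one_div_pow, ← div_eq_mul_one_div, le_div_iff₀ (by exact_mod_cast hq)]
  exact_mod_cast (Nat.mul_le_mul_left _ hcount).trans key

theorem card_reducible_tuples_le {d : ℕ} (hd : 2 ≤ d) :
    (Nat.card {f : Fin d → (V ≃ₗ[K] V) //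
        ∃ W : Submodule K V, W ≠ ⊥ ∧ W ≠ ⊤ ∧ ∀ i, f i • W = W} : ℝ)
      ≤ Nat.card (V ≃ₗ[K] V) ^ d / Nat.card K := by
  have : Finite V := Module.finite_of_finite K
  have : Finite (V ≃ₗ[K] V) := Finite.of_injective _ DFunLike.coe_injective
  have hx0 : 0 ≤ 1 / (Nat.card K : ℝ) := by positivity
  have hx : 1 / (Nat.card K : ℝ) ≤ 1 / 2 := by
    gcongr
    exact_mod_cast Finite.one_lt_card
  have hcover : ∀ f : Fin d → (V ≃ₗ[K] V),
      (∃ W : Submodule K V, W ≠ ⊥ ∧ W ≠ ⊤ ∧ ∀ i, f i • W = W) →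
      ∃ k ∈ Ioo 0 (finrank K V), ∃ W : Submodule K V, finrank K W = k ∧ ∀ i, f i • W = W := by
    rintro f ⟨W, hbot, htop, hW⟩
    refine ⟨finrank K W, mem_Ioo.2 ⟨?_, Submodule.finrank_lt htop⟩, W, rfl, hW⟩
    exact Nat.pos_of_ne_zero fun h => hbot (Submodule.finrank_eq_zero.1 h)
  calc _ ≤ (∑ k ∈ Ioo 0 (finrank K V), Nat.card {f : Fin d → (V ≃ₗ[K] V) //
          ∃ W : Submodule K V, finrank K W = k ∧ ∀ i, f i • W = W} : ℝ) := by
        exact_mod_cast Nat.card_subtype_le_sum_of_cover _ _ hcover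
    _ ≤ ∑ k ∈ Ioo 0 (finrank K V),
        Nat.card (V ≃ₗ[K] V) ^ d * (1 / Nat.card K : ℝ) ^ (k * (finrank K V - k)) :=
        sum_le_sum fun k hk => card_tuples_fixing_finrank_eq_le hd (mem_Ioo.1 hk).2.le
    _ ≤ Nat.card (V ≃ₗ[K] V) ^ d * (1 / Nat.card K) := by
        rw [← mul_sum]
        gcongr
        exact sum_Ioo_pow_mul_sub_le hx0 hx _
    _ = _ := mul_one_div _ _

end Reducible

noncomputable def Matrix.GeneralLinearGroup.toLinearEquiv {ι R : Type*} [DecidableEq ι] [Fintype ι]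
    [CommRing R] : GL ι R ≃* ((ι → R) ≃ₗ[R] (ι → R)) :=
  toLin.trans (LinearMap.GeneralLinearGroup.generalLinearEquiv R _)

theorem Matrix.GeneralLinearGroup.toLinearEquiv_apply {ι R : Type*} [DecidableEq ι] [Fintype ι]
    [CommRing R] (A : GL ι R) (v : ι → R) : toLinearEquiv A v = (A : Matrix ι ι R).mulVec v :=
  rfl

section MatrixIrreducible

open Matrix.GeneralLinearGroup

variable {n p : ℕ} [Fact p.Prime]

theorem exists_fixed_of_not_matrixIrreducible {ι : Type*} {f : ι → GL (Fin n) (ZMod p)}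
    (h : ¬ MatrixIrreducible (FreeGroup.lift f)) :
    ∃ W : Submodule (ZMod p) (Fin n → ZMod p),
      W ≠ ⊥ ∧ W ≠ ⊤ ∧ ∀ i, toLinearEquiv (f i) • W = W := by
  simp only [MatrixIrreducible, not_forall, not_or] at h
  obtain ⟨W, hinv, hbot, htop⟩ := h
  refine ⟨W, hbot, htop, fun i => ?_⟩
  have hle : toLinearEquiv (f i) • W ≤ W := by
    rintro _ ⟨w, hw, rfl⟩
    have := hinv (FreeGroup.of i) w hw
    rw [FreeGroup.lift_apply_of] at this
    rwa [DistribSMul.toLinearMap_apply, LinearEquiv.smul_def, toLinearEquiv_apply]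
  exact Submodule.eq_of_le_of_finrank_eq hle (LinearEquiv.finrank_smul_submodule _ W)

theorem card_matrixIrreducible_tuples_ge {d : ℕ} (hd : 2 ≤ d) :
    (1 - 1 / (p : ℝ)) * Nat.card (GL (Fin n) (ZMod p)) ^ d
      ≤ Nat.card {f : Fin d → GL (Fin n) (ZMod p) // MatrixIrreducible (FreeGroup.lift f)} := by
  classical
  have : Finite ((Fin n → ZMod p) ≃ₗ[ZMod p] (Fin n → ZMod p)) :=
    Finite.of_equiv _ toLinearEquiv.toEquiv
  have htotal :
      Nat.card {f : Fin d → GL (Fin n) (ZMod p) // MatrixIrreducible (FreeGroup.lift f)}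
        + Nat.card {f : Fin d → GL (Fin n) (ZMod p) // ¬ MatrixIrreducible (FreeGroup.lift f)}
        = Nat.card (GL (Fin n) (ZMod p)) ^ d := by
    rw [← Nat.card_sum, Nat.card_congr (Equiv.sumCompl _), Nat.card_fun, Nat.card_fin]
  have hred :
      Nat.card {f : Fin d → GL (Fin n) (ZMod p) // ¬ MatrixIrreducible (FreeGroup.lift f)}
        ≤ Nat.card {f : Fin d → ((Fin n → ZMod p) ≃ₗ[ZMod p] (Fin n → ZMod p)) //
          ∃ W : Submodule (ZMod p) (Fin n → ZMod p), W ≠ ⊥ ∧ W ≠ ⊤ ∧ ∀ i, f i • W = W} :=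
    Nat.card_le_card_of_injective
      (fun f => ⟨fun i => toLinearEquiv (f.1 i), exists_fixed_of_not_matrixIrreducible f.2⟩)
      fun f f' h => Subtype.ext <| funext fun i =>
        toLinearEquiv.injective (congrFun (congrArg Subtype.val h) i)
  have hbound := card_reducible_tuples_le (K := ZMod p) (V := Fin n → ZMod p) hd
  rw [Nat.card_zmod, ← Nat.card_congr toLinearEquiv.toEquiv] at hbound
  have hred' := (Nat.cast_le (α := ℝ)).2 hred
  have htotal' := congrArg (Nat.cast (R := ℝ)) htotal
  push_cast at htotal'
  rw [sub_mul, one_mul, ← mul_div_right_comm, one_mul]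
  linarith

theorem exists_nonconjugate_matrixIrreducible_tuples {d : ℕ} (hd : 2 ≤ d) :
    ∃ R : Finset (Fin d → GL (Fin n) (ZMod p)),
      (∀ f ∈ R, MatrixIrreducible (FreeGroup.lift f)) ∧
      (∀ f ∈ R, ∀ f' ∈ R, f' ∈ orbit (ConjAct (GL (Fin n) (ZMod p))) f → f = f') ∧
      (1 - 1 / (p : ℝ)) * Nat.card (GL (Fin n) (ZMod p)) ^ (d - 1) ≤ #R := by
  classical
  obtain ⟨R, hRS, hR, hcard⟩ := exists_orbit_transversal_card_le
    (G := ConjAct (GL (Fin n) (ZMod p)))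
    (univ.filter fun f : Fin d → GL (Fin n) (ZMod p) => MatrixIrreducible (FreeGroup.lift f))
  refine ⟨R, fun f hf => (mem_filter.1 (hRS hf)).2, hR, ?_⟩
  rw [← Fintype.card_subtype, ← Nat.card_eq_fintype_card] at hcard
  have hg : (0 : ℝ) < Nat.card (GL (Fin n) (ZMod p)) := by exact_mod_cast Nat.card_pos
  refine le_of_mul_le_mul_right ?_ hg
  rw [mul_assoc, ← pow_succ, Nat.sub_add_cancel (by omega)]
  exact (card_matrixIrreducible_tuples_ge hd).trans (by exact_mod_cast hcard)

end MatrixIrreducible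

theorem stmt_19_general (d n p : ℕ) (hp : p.Prime) (hd : 2 ≤ d) :
    ∃ R : Finset (FreeGroup (Fin d) →* GL (Fin n) (ZMod p)),
      (∀ ρ ∈ R, MatrixIrreducible ρ) ∧
      (∀ ρ ∈ R, ∀ σ ∈ R, ρ ≠ σ →
        ¬ ∃ u : GL (Fin n) (ZMod p), ∀ g, σ g = u * ρ g * u⁻¹) ∧
      (1 - 1 / (p : ℝ) - 1 / (p : ℝ) ^ 2) ^ d * (p : ℝ) ^ (n ^ 2 * (d - 1)) ≤
        (R.card : ℝ) := by
  have := Fact.mk hp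
  obtain ⟨R, hirr, hdistinct, hcard⟩ :=
    exists_nonconjugate_matrixIrreducible_tuples (n := n) (p := p) hd
  refine ⟨R.map FreeGroup.lift.toEmbedding, ?_, ?_, ?_⟩
  · intro _ hρ
    obtain ⟨f, hf, rfl⟩ := mem_map.1 hρ
    exact hirr f hf
  · rintro _ hρ _ hσ hne ⟨u, hu⟩
    obtain ⟨f, hf, rfl⟩ := mem_map.1 hρ
    obtain ⟨f', hf', rfl⟩ := mem_map.1 hσ
    refine hne (congrArg _ (hdistinct f hf f' hf' ⟨ConjAct.toConjAct u, funext fun i => ?_⟩))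
    simpa [ConjAct.smul_def] using (hu (FreeGroup.of i)).symm
  · have hGL := card_GL_field_ge (K := ZMod p) n
    rw [ZMod.card] at hGL
    have hx : 1 / (p : ℝ) ≤ 1 / 2 := by gcongr; exact_mod_cast hp.two_le
    have hc : 0 ≤ 1 - 1 / (p : ℝ) - 1 / (p : ℝ) ^ 2 := by
      rw [← one_div_pow]; nlinarith [show 0 ≤ 1 / (p : ℝ) by positivity]
    rw [card_map]
    calc _ = (1 - 1 / (p : ℝ) - 1 / (p : ℝ) ^ 2) *
          ((1 - 1 / (p : ℝ) - 1 / (p : ℝ) ^ 2) * (p : ℝ) ^ (n ^ 2)) ^ (d - 1) := by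
          rw [mul_pow, ← mul_assoc, ← pow_succ', ← pow_mul, Nat.sub_add_cancel (by omega)]
      _ ≤ (1 - 1 / (p : ℝ)) * Nat.card (GL (Fin n) (ZMod p)) ^ (d - 1) :=
          mul_le_mul (by linarith [show 0 ≤ 1 / (p : ℝ) ^ 2 by positivity])
            (pow_le_pow_left₀ (by positivity) hGL _) (by positivity) (by linarith)
      _ ≤ _ := hcard

/-- For the free group `F` on `d ≥ 2` generators and a prime `p`, the number of
equivalence classes of irreducible `n`-dimensional representations of `F` over `F_p`
is at least `c_p^d · p^(n²(d-1))` with `c_p = 1 - 1/p - 1/p²`: there exist that many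
pairwise non-conjugate irreducible representations. -/
theorem stmt_19 (d n p : ℕ) (hp : p.Prime) (hd : 2 ≤ d) (hn : 1 ≤ n) :
    ∃ R : Finset (FreeGroup (Fin d) →* GL (Fin n) (ZMod p)),
      (∀ ρ ∈ R, MatrixIrreducible ρ) ∧
      (∀ ρ ∈ R, ∀ σ ∈ R, ρ ≠ σ →
        ¬ ∃ u : GL (Fin n) (ZMod p), ∀ g, σ g = u * ρ g * u⁻¹) ∧
      (1 - 1 / (p : ℝ) - 1 / (p : ℝ) ^ 2) ^ d * (p : ℝ) ^ (n ^ 2 * (d - 1)) ≤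
        (R.card : ℝ) :=
  stmt_19_general d n p hp hd
end
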